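/- Let N ≥ 3, β > 0, let H ⊂ ℝ^N be a closed half-space with reflection ρ_H, and let w : ℝ^N → [0,∞) be measurable. Then (as an inequality of integrals with values in [0,∞]) ∫_{ℝ^N}∫_{ℝ^N} w(x) w(y) |x−y|^{−β} dx dy ≤ ∫_{ℝ^N}∫_{ℝ^N} w^H(x) w^H(y) |x−y|^{−β} dx dy. -/

import Mathlib

open MeasureTheory
open scoped ENNReal

/-- Reflection across the boundary hyperplane of the closed half-space
`H = {x : ⟪x, e⟫ ≤ c}` (for a unit vector `e`). -/
noncomputable def reflect (N : ℕ) (e : EuclideanSpace ℝ (Fin N)) (c : ℝ)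
    (x : EuclideanSpace ℝ (Fin N)) : EuclideanSpace ℝ (Fin N) :=
  x - (2 * ((inner ℝ x e : ℝ) - c)) • e

variable {N : ℕ} {e : EuclideanSpace ℝ (Fin N)} {c : ℝ}

lemma inner_reflect (he : ‖e‖ = 1) (x : EuclideanSpace ℝ (Fin N)) :
    (inner ℝ (reflect N e c x) e : ℝ) = 2 * c - inner ℝ x e := by
  rw [reflect, inner_sub_left, real_inner_smul_left, real_inner_self_eq_norm_sq, he]
  ring

lemma reflect_reflect (he : ‖e‖ = 1) (x : EuclideanSpace ℝ (Fin N)) :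
    reflect N e c (reflect N e c x) = x := by
  rw [reflect, inner_reflect he, reflect]
  module

lemma reflect_fixed (hx : (inner ℝ x e : ℝ) = c) : reflect N e c x = x := by
  rw [reflect, hx]
  simp

lemma norm_add_smul (he : ‖e‖ = 1) (u : EuclideanSpace ℝ (Fin N)) (s : ℝ) :
    ‖u + s • e‖ ^ 2 = ‖u‖ ^ 2 + 2 * s * (inner ℝ u e : ℝ) + s ^ 2 := by
  rw [norm_add_sq_real, real_inner_smul_right, norm_smul, he, mul_one, Real.norm_eq_abs, sq_abs]
  ring

lemma norm_eq_of_sq (a b : EuclideanSpace ℝ (Fin N)) (h : ‖a‖ ^ 2 = ‖b‖ ^ 2) : ‖a‖ = ‖b‖ := by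
  calc ‖a‖ = Real.sqrt (‖a‖ ^ 2) := (Real.sqrt_sq (norm_nonneg a)).symm
    _ = Real.sqrt (‖b‖ ^ 2) := by rw [h]
    _ = ‖b‖ := Real.sqrt_sq (norm_nonneg b)

lemma norm_reflect_sub (he : ‖e‖ = 1) (x y : EuclideanSpace ℝ (Fin N)) :
    ‖reflect N e c x - reflect N e c y‖ = ‖x - y‖ := by
  have h1 : reflect N e c x - reflect N e c y
      = (x - y) + (-(2 * ((inner ℝ x e : ℝ) - (inner ℝ y e : ℝ)))) • e := by
    rw [reflect, reflect]; module
  apply norm_eq_of_sq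
  rw [h1, norm_add_smul he, inner_sub_left]
  ring

lemma norm_sub_reflect (he : ‖e‖ = 1) (x y : EuclideanSpace ℝ (Fin N)) :
    ‖reflect N e c x - y‖ = ‖x - reflect N e c y‖ := by
  conv_rhs => rw [← reflect_reflect (c := c) he x]
  rw [norm_reflect_sub he]

lemma norm_le_reflect (he : ‖e‖ = 1) {x y : EuclideanSpace ℝ (Fin N)}
    (hx : (inner ℝ x e : ℝ) ≤ c) (hy : (inner ℝ y e : ℝ) ≤ c) :
    ‖x - y‖ ≤ ‖x - reflect N e c y‖ := by
  have h1 : x - reflect N e c y = (x - y) + (2 * ((inner ℝ y e : ℝ) - c)) • e := by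
    rw [reflect]; module
  have h2 : ‖x - reflect N e c y‖ ^ 2
      = ‖x - y‖ ^ 2 + 4 * (c - (inner ℝ x e : ℝ)) * (c - (inner ℝ y e : ℝ)) := by
    rw [h1, norm_add_smul he, inner_sub_left]
    ring
  calc ‖x - y‖ = Real.sqrt (‖x - y‖ ^ 2) := (Real.sqrt_sq (norm_nonneg _)).symm
    _ ≤ Real.sqrt (‖x - reflect N e c y‖ ^ 2) := by
        apply Real.sqrt_le_sqrt
        rw [h2]
        nlinarith [mul_nonneg (sub_nonneg.2 hx) (sub_nonneg.2 hy)]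
    _ = _ := Real.sqrt_sq (norm_nonneg _)

lemma reflect_eq_lin (he : ‖e‖ = 1) (x : EuclideanSpace ℝ (Fin N)) :
    reflect N e c x = (ℝ ∙ e)ᗮ.reflection x + (2 * c) • e := by
  rw [Submodule.reflection_apply, Submodule.starProjection_orthogonal_val,
    Submodule.starProjection_singleton, he, real_inner_comm]
  rw [reflect]
  simp only [one_pow, RCLike.ofReal_one, div_one]
  module

lemma reflect_measurePreserving (he : ‖e‖ = 1) :
    MeasurePreserving (reflect N e c) volume volume := by
  have h := ((measurePreserving_add_right volume ((2 * c) • e)).comp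
    (((ℝ ∙ e)ᗮ.reflection).measurePreserving))
  have hfe : reflect N e c = (fun x => x + (2 * c) • e) ∘ ⇑(ℝ ∙ e)ᗮ.reflection :=
    funext (reflect_eq_lin he)
  rw [hfe]
  exact h

lemma hyperplane_null (he : ‖e‖ = 1) :
    (volume : Measure (EuclideanSpace ℝ (Fin N))) {x | (inner ℝ x e : ℝ) = c} = 0 := by
  have hset : {x : EuclideanSpace ℝ (Fin N) | (inner ℝ x e : ℝ) = c}
      = (· + (-c) • e) ⁻¹' ((ℝ ∙ e)ᗮ : Set (EuclideanSpace ℝ (Fin N))) := by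
    ext x
    simp only [Set.mem_setOf_eq, Set.mem_preimage, SetLike.mem_coe,
      Submodule.mem_orthogonal_singleton_iff_inner_right]
    rw [inner_add_right, real_inner_smul_right, real_inner_self_eq_norm_sq, he]
    rw [real_inner_comm e x]
    constructor
    · intro h; rw [h]; ring
    · intro h; nlinarith
  rw [hset, measure_preimage_add_right]
  apply Measure.addHaar_submodule
  intro htop
  have : e ∈ (ℝ ∙ e)ᗮ := htop ▸ Submodule.mem_top
  rw [Submodule.mem_orthogonal_singleton_iff_inner_right, real_inner_self_eq_norm_sq, he] at this
  norm_num at this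

lemma inner_measurable :
    Measurable (fun x : EuclideanSpace ℝ (Fin N) => (inner ℝ x e : ℝ)) :=
  (continuous_id.inner continuous_const).measurable

lemma halfspace_measurable :
    MeasurableSet {x : EuclideanSpace ℝ (Fin N) | (inner ℝ x e : ℝ) ≤ c} :=
  measurableSet_le inner_measurable measurable_const

lemma reflect_measurable (he : ‖e‖ = 1) :
    Measurable (reflect N e c) := (reflect_measurePreserving (c := c) he).measurable

lemma lintegral_split (he : ‖e‖ = 1) (F : EuclideanSpace ℝ (Fin N) → ℝ≥0∞)
    (hF : Measurable F) :
    ∫⁻ x, F x = ∫⁻ x in {x : EuclideanSpace ℝ (Fin N) | (inner ℝ x e : ℝ) ≤ c},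
      (F x + F (reflect N e c x)) := by
  set S := {x : EuclideanSpace ℝ (Fin N) | (inner ℝ x e : ℝ) ≤ c} with hSdef
  have hS : MeasurableSet S := halfspace_measurable
  have hemb : MeasurableEmbedding (reflect N e c) := by
    have : Function.Bijective (reflect N e c) :=
      Function.Involutive.bijective (reflect_reflect he)
    exact (MeasurableEquiv.mk
      { toFun := reflect N e c, invFun := reflect N e c,
        left_inv := reflect_reflect he, right_inv := reflect_reflect he }
      (reflect_measurable he) (reflect_measurable he)).measurableEmbedding
  have hpre : reflect N e c ⁻¹' Sᶜ = {x : EuclideanSpace ℝ (Fin N) | (inner ℝ x e : ℝ) < c} := by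
    ext x
    simp only [Set.mem_preimage, Set.mem_compl_iff, hSdef, Set.mem_setOf_eq, not_le,
      inner_reflect he]
    constructor <;> intro h <;> linarith
  have hae : {x : EuclideanSpace ℝ (Fin N) | (inner ℝ x e : ℝ) < c} =ᵐ[volume] S := by
    rw [Filter.eventuallyEq_set]
    have : ∀ᵐ x : EuclideanSpace ℝ (Fin N) ∂volume, (inner ℝ x e : ℝ) ≠ c := by
      rw [ae_iff]
      simpa using hyperplane_null (c := c) he
    filter_upwards [this] with x hx
    simp only [Set.mem_setOf_eq, hSdef]
    constructor
    · intro h; exact h.le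
    · intro h; exact lt_of_le_of_ne h hx
  calc ∫⁻ x, F x = (∫⁻ x in S, F x) + ∫⁻ x in Sᶜ, F x := (lintegral_add_compl F hS).symm
    _ = (∫⁻ x in S, F x) + ∫⁻ x in S, F (reflect N e c x) := by
        rw [← (reflect_measurePreserving (c := c) he).setLIntegral_comp_preimage_emb hemb F Sᶜ,
          hpre, setLIntegral_congr hae]
    _ = ∫⁻ x in S, (F x + F (reflect N e c x)) := by
        rw [lintegral_add_left hF]

lemma four_term {a a' b b' K1 K2 : ℝ} (ha : 0 ≤ a) (ha' : 0 ≤ a') (hb : 0 ≤ b) (hb' : 0 ≤ b')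
    (hK2 : 0 ≤ K2) (hK : K2 ≤ K1) :
    a*b*K1 + a*b'*K2 + a'*b*K2 + a'*b'*K1 ≤
      max a a' * max b b' * K1 + max a a' * min b b' * K2
        + min a a' * max b b' * K2 + min a a' * min b b' * K1 := by
  rcases le_total a a' with h1 | h1 <;> rcases le_total b b' with h2 | h2
  · rw [max_eq_right h1, min_eq_left h1, max_eq_right h2, min_eq_left h2]; nlinarith
  · rw [max_eq_right h1, min_eq_left h1, max_eq_left h2, min_eq_right h2]
    nlinarith [mul_nonneg (mul_nonneg (sub_nonneg.2 h1) (sub_nonneg.2 h2)) (sub_nonneg.2 hK)]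
  · rw [max_eq_left h1, min_eq_right h1, max_eq_right h2, min_eq_left h2]
    nlinarith [mul_nonneg (mul_nonneg (sub_nonneg.2 h1) (sub_nonneg.2 h2)) (sub_nonneg.2 hK)]
  · rw [max_eq_left h1, min_eq_right h1, max_eq_left h2, min_eq_right h2]

lemma four_term_diag {a a' K1 K2 : ℝ} :
    a*a*K1 + a*a'*K2 + a'*a*K2 + a'*a'*K1 ≤
      max a a' * max a a' * K1 + max a a' * min a a' * K2
        + min a a' * max a a' * K2 + min a a' * min a a' * K1 := by
  rcases le_total a a' with h1 | h1
  · rw [max_eq_right h1, min_eq_left h1]; nlinarith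
  · rw [max_eq_left h1, min_eq_right h1]


/-- Polarization of `g : ℝ^N → ℝ` with respect to the closed half-space
`H = {x : ⟪x, e⟫ ≤ c}`. -/
noncomputable def polarize (N : ℕ) (e : EuclideanSpace ℝ (Fin N)) (c : ℝ)
    (g : EuclideanSpace ℝ (Fin N) → ℝ) (x : EuclideanSpace ℝ (Fin N)) : ℝ :=
  if (inner ℝ x e : ℝ) ≤ c then max (g x) (g (reflect N e c x))
  else min (g x) (g (reflect N e c x))

theorem riesz_energy_le_polarization
    (N : ℕ) (hN : 3 ≤ N) (β : ℝ) (hβ : 0 < β)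
    (e : EuclideanSpace ℝ (Fin N)) (he : ‖e‖ = 1) (c : ℝ)
    (w : EuclideanSpace ℝ (Fin N) → ℝ) (hw : Measurable w) (hw0 : ∀ x, 0 ≤ w x) :
    ∫⁻ x, ∫⁻ y, ENNReal.ofReal (w x * w y * ‖x - y‖ ^ (-β)) ≤
      ∫⁻ x, ∫⁻ y,
        ENNReal.ofReal (polarize N e c w x * polarize N e c w y * ‖x - y‖ ^ (-β)) := by
  set S := {x : EuclideanSpace ℝ (Fin N) | (inner ℝ x e : ℝ) ≤ c} with hSdef
  set ρ := reflect N e c with hρdef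
  set v := polarize N e c w with hvdef
  have hρm : Measurable ρ := reflect_measurable he
  have hvm : Measurable v := by
    rw [hvdef]
    unfold polarize
    exact Measurable.ite halfspace_measurable (hw.max (hw.comp hρm)) (hw.min (hw.comp hρm))
  have hv0 : ∀ x, 0 ≤ v x := by
    intro x
    rw [hvdef]
    unfold polarize
    split
    · exact le_trans (hw0 x) (le_max_left _ _)
    · exact le_min (hw0 _) (hw0 _)
  have hvmax : ∀ x, (inner ℝ x e : ℝ) ≤ c → v x = max (w x) (w (ρ x)) := by
    intro x hx
    rw [hvdef]; unfold polarize; rw [if_pos hx]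
  have hvmin : ∀ x, (inner ℝ x e : ℝ) ≤ c → v (ρ x) = min (w x) (w (ρ x)) := by
    intro x hx
    by_cases hcc : (inner ℝ x e : ℝ) = c
    · have hfix : ρ x = x := reflect_fixed hcc
      rw [hfix, hvdef]
      unfold polarize
      rw [if_pos hx, ← hρdef, hfix]
      simp
    · have hlt : (inner ℝ x e : ℝ) < c := lt_of_le_of_ne hx hcc
      have hneg : ¬ ((inner ℝ (ρ x) e : ℝ) ≤ c) := by
        rw [hρdef, inner_reflect he]; linarith
      rw [hvdef]
      unfold polarize
      rw [if_neg hneg, ← hρdef]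
      have hrr : ρ (ρ x) = x := reflect_reflect he x
      rw [hrr]
      exact min_comm _ _
  -- measurability of kernels
  have hkm : Measurable (fun p : EuclideanSpace ℝ (Fin N) × EuclideanSpace ℝ (Fin N) =>
      ‖p.1 - p.2‖ ^ (-β)) :=
    ((continuous_fst.sub continuous_snd).norm.measurable).pow measurable_const
  have huncur : ∀ u : EuclideanSpace ℝ (Fin N) → ℝ, Measurable u →
      Measurable (fun p : EuclideanSpace ℝ (Fin N) × EuclideanSpace ℝ (Fin N) =>
        ENNReal.ofReal (u p.1 * u p.2 * ‖p.1 - p.2‖ ^ (-β))) := fun u hu =>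
    ENNReal.measurable_ofReal.comp (((hu.comp measurable_fst).mul (hu.comp measurable_snd)).mul hkm)
  -- key decomposition
  have key : ∀ u : EuclideanSpace ℝ (Fin N) → ℝ, Measurable u →
      ∫⁻ x, ∫⁻ y, ENNReal.ofReal (u x * u y * ‖x - y‖ ^ (-β))
        = ∫⁻ x in S, ∫⁻ y in S,
            (ENNReal.ofReal (u x * u y * ‖x - y‖ ^ (-β))
              + ENNReal.ofReal (u x * u (ρ y) * ‖x - ρ y‖ ^ (-β))
              + (ENNReal.ofReal (u (ρ x) * u y * ‖ρ x - y‖ ^ (-β))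
              + ENNReal.ofReal (u (ρ x) * u (ρ y) * ‖ρ x - ρ y‖ ^ (-β)))) := by
    intro u hu
    have hun := huncur u hu
    have hslice : ∀ x, Measurable (fun y => ENNReal.ofReal (u x * u y * ‖x - y‖ ^ (-β))) :=
      fun x => hun.comp measurable_prodMk_left
    have Fmeas : Measurable (fun x => ∫⁻ y, ENNReal.ofReal (u x * u y * ‖x - y‖ ^ (-β))) :=
      hun.lintegral_prod_right'
    rw [lintegral_split he _ Fmeas]
    apply lintegral_congr
    intro x
    have h2 : Measurable (fun y => ENNReal.ofReal (u x * u (ρ y) * ‖x - ρ y‖ ^ (-β))) :=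
      (hslice x).comp hρm
    have hA : Measurable (fun y => ENNReal.ofReal (u x * u y * ‖x - y‖ ^ (-β))
        + ENNReal.ofReal (u x * u (ρ y) * ‖x - ρ y‖ ^ (-β))) := (hslice x).add h2
    rw [lintegral_split he _ (hslice x), lintegral_split he _ (hslice (ρ x)),
      ← lintegral_add_left hA]
  have hq0 : ∀ (u : EuclideanSpace ℝ (Fin N) → ℝ), (∀ z, 0 ≤ u z) →
      ∀ a b : EuclideanSpace ℝ (Fin N), 0 ≤ u a * u b * ‖a - b‖ ^ (-β) := fun u hu a b =>
    mul_nonneg (mul_nonneg (hu a) (hu b)) (Real.rpow_nonneg (norm_nonneg _) _)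
  have oadd : ∀ p1 p2 p3 p4 : ℝ, 0 ≤ p1 → 0 ≤ p2 → 0 ≤ p3 → 0 ≤ p4 →
      ENNReal.ofReal p1 + ENNReal.ofReal p2 + (ENNReal.ofReal p3 + ENNReal.ofReal p4)
        = ENNReal.ofReal (p1 + p2 + (p3 + p4)) := by
    intro p1 p2 p3 p4 h1 h2 h3 h4
    rw [← ENNReal.ofReal_add h1 h2, ← ENNReal.ofReal_add h3 h4,
      ← ENNReal.ofReal_add (add_nonneg h1 h2) (add_nonneg h3 h4)]
  rw [key w hw, key v hvm]
  apply setLIntegral_mono' halfspace_measurable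
  intro x hx
  apply setLIntegral_mono' halfspace_measurable
  intro y hy
  simp only [Set.mem_setOf_eq] at hx hy
  rw [oadd _ _ _ _ (hq0 w hw0 _ _) (hq0 w hw0 _ _) (hq0 w hw0 _ _) (hq0 w hw0 _ _),
    oadd _ _ _ _ (hq0 v hv0 _ _) (hq0 v hv0 _ _) (hq0 v hv0 _ _) (hq0 v hv0 _ _)]
  apply ENNReal.ofReal_le_ofReal
  have hn1 : ‖ρ x - ρ y‖ = ‖x - y‖ := norm_reflect_sub he x y
  have hn2 : ‖ρ x - y‖ = ‖x - ρ y‖ := norm_sub_reflect he x y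
  rw [hn1, hn2, hvmax x hx, hvmax y hy, hvmin x hx, hvmin y hy]
  by_cases hxy : x = y
  · subst hxy
    have := four_term_diag (a := w x) (a' := w (ρ x))
      (K1 := ‖x - x‖ ^ (-β)) (K2 := ‖x - ρ x‖ ^ (-β))
    linarith
  · have hK : ‖x - ρ y‖ ^ (-β) ≤ ‖x - y‖ ^ (-β) := by
      apply Real.rpow_le_rpow_of_nonpos
      · exact norm_sub_pos_iff.2 hxy
      · exact norm_le_reflect he hx hy
      · exact neg_nonpos.2 hβ.le
    have := four_term (hw0 x) (hw0 (ρ x)) (hw0 y) (hw0 (ρ y))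
      (Real.rpow_nonneg (norm_nonneg _) _) hK
    linarith
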